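/- Let U ⊆ ℝ^m be open and, for each l,i,j ∈ {1,…,m}, let Γ^l_{ij} : U → ℝ be locally Lipschitz functions with Γ^l_{ij} = Γ^l_{ji}, and let g : U → (symmetric bilinear forms on ℝ^m) be continuous. Assume that for every p ∈ U with p^m = 0 and every v ∈ ℝ^m with v^m = 0 and g_p(v,v) < 0 one has Σ_{i,j} Γ^m_{ij}(p) v^i v^j ≥ 0. Let γ : [0,b] → U be a C² curve satisfying the geodesic equation γ̈^l(s) = −Σ_{i,j} Γ^l_{ij}(γ(s)) γ̇^i(s) γ̇^j(s), with γ^m(0) = 0, γ̇^m(0) = 0, g_{γ(0)}(γ̇(0), γ̇(0)) < 0, γ^m(s) ≥ 0 for all s ∈ [0,b], and with (γ^1(s),…,γ^{m−1}(s),0) ∈ U for all s ∈ [0,b]. Then there exists b' ∈ (0,b] such that γ^m(s) = 0 for every s ∈ [0,b']. -/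

import Mathlib

/-!
Write `e` for the last coordinate and flatten a phase-space point `(p, v)` to
`(p̂, v̂)` by setting its `e`-th coordinates to zero. Along the geodesic, the flattened
point stays in `U` and, near `s = 0`, is timelike, so the convexity hypothesis gives
`Q(p̂, v̂) ≥ 0` for `Q(p, v) = ∑ Γ^e_{ij}(p) v^i v^j`. Since `Q` is locally Lipschitz and
flattening moves `(γ, γ')` by at most `γ^e + |γ'^e|`, the geodesic equation yields
`(γ^e)'' = -Q(γ, γ') ≤ K (γ^e + |(γ^e)'|)`. A Grönwall argument applied to
`F(s) = ∫₀ˢ max((γ^e)', 0)` then shows that a nonnegative solution of this inequality with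
zero initial data vanishes.
-/

open Set Filter Topology NNReal intervalIntegral

theorem LipschitzOnWith.norm_le_add_mul_dist {α E : Type*} [PseudoMetricSpace α]
    [SeminormedAddCommGroup E] {f : α → E} {K : ℝ≥0} {s : Set α}
    (hf : LipschitzOnWith K f s) {x y : α} (hx : x ∈ s) (hy : y ∈ s) :
    ‖f y‖ ≤ ‖f x‖ + K * dist y x :=
  calc ‖f y‖ ≤ ‖f x‖ + dist (f y) (f x) :=
        dist_eq_norm (f y) (f x) ▸ norm_le_norm_add_norm_sub' _ _
    _ ≤ ‖f x‖ + K * dist y x := by gcongr; exact hf.dist_le_mul y hy x hx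

namespace LocallyLipschitzOn

variable {α : Type*} [PseudoMetricSpace α] {s : Set α}

theorem smul {𝕜 E : Type*} [SeminormedRing 𝕜] [SeminormedAddCommGroup E] [Module 𝕜 E]
    [IsBoundedSMul 𝕜 E] {f : α → 𝕜} {g : α → E} (hf : LocallyLipschitzOn s f)
    (hg : LocallyLipschitzOn s g) : LocallyLipschitzOn s fun x => f x • g x := by
  intro x hx
  obtain ⟨Kf, t, ht, hft⟩ := hf hx
  obtain ⟨Kg, u, hu, hgu⟩ := hg hx
  have hw : t ∩ u ∩ Metric.ball x 1 ∈ 𝓝[s] x :=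
    inter_mem (inter_mem ht hu) (mem_nhdsWithin_of_mem_nhds (Metric.ball_mem_nhds x one_pos))
  obtain ⟨⟨hxt, hxu⟩, -⟩ := mem_of_mem_nhdsWithin hx hw
  refine ⟨(‖f x‖₊ + Kf) * Kg + Kf * (‖g x‖₊ + Kg), _, hw,
    .of_dist_le_mul fun y ⟨⟨hyt, hyu⟩, hy⟩ z ⟨⟨hzt, hzu⟩, hz⟩ => ?_⟩
  have hfd := hft.dist_le_mul y hyt z hzt
  have hgd := hgu.dist_le_mul y hyu z hzu
  rw [dist_eq_norm] at hfd hgd ⊢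
  calc ‖f y • g y - f z • g z‖ = ‖f y • (g y - g z) + (f y - f z) • g z‖ := by
        rw [smul_sub, sub_smul, sub_add_sub_cancel]
    _ ≤ ‖f y‖ * ‖g y - g z‖ + ‖f y - f z‖ * ‖g z‖ :=
        (norm_add_le _ _).trans (add_le_add (norm_smul_le _ _) (norm_smul_le _ _))
    _ ≤ (‖f x‖₊ + Kf) * (Kg * dist y z) + Kf * dist y z * (‖g x‖₊ + Kg) := by
        gcongr
        · exact (hft.norm_le_add_mul_dist hxt hyt).trans (by
            rw [coe_nnnorm]; gcongr; exact mul_le_of_le_one_right Kf.2 (Metric.mem_ball.1 hy).le)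
        · exact (hgu.norm_le_add_mul_dist hxu hzu).trans (by
            rw [coe_nnnorm]; gcongr; exact mul_le_of_le_one_right Kg.2 (Metric.mem_ball.1 hz).le)
    _ = _ := by push_cast; ring

theorem sum {E ι : Type*} [SeminormedAddCommGroup E] {f : ι → α → E} (t : Finset ι)
    (hf : ∀ i ∈ t, LocallyLipschitzOn s (f i)) :
    LocallyLipschitzOn s fun x => ∑ i ∈ t, f i x := by
  classical
  induction t using Finset.induction_on with
  | empty => simpa using (LocallyLipschitz.const (0 : E)).locallyLipschitzOn
  | insert i t hi ih =>
    simp only [Finset.sum_insert hi]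
    exact (hf i (t.mem_insert_self i)).add (ih fun j hj => hf j (Finset.mem_insert_of_mem hj))

theorem comp_lipschitzWith {β γ : Type*} [PseudoMetricSpace β] [PseudoMetricSpace γ]
    {t : Set β} {f : β → γ} {φ : α → β} {K : ℝ≥0} (hf : LocallyLipschitzOn t f)
    (hφ : LipschitzWith K φ) (hst : MapsTo φ s t) : LocallyLipschitzOn s (f ∘ φ) := by
  intro x hx
  obtain ⟨Kf, u, hu, hfu⟩ := hf (hst hx)
  exact ⟨Kf * K, φ ⁻¹' u, hφ.continuous.continuousWithinAt.tendsto_nhdsWithin hst hu,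
    hfu.comp hφ.lipschitzOnWith (mapsTo_preimage φ u)⟩

theorem exists_eventually_neg_le_mul_dist {Y X : Type*} [TopologicalSpace Y]
    [PseudoMetricSpace X] {S : Set X} {Q G : X → ℝ} (hQ : LocallyLipschitzOn S Q)
    (hG : ContinuousOn G S) {T : Set Y} {a : Y} {c d : Y → X} (hc : ContinuousWithinAt c T a)
    (hd : ContinuousWithinAt d T a) (hcS : MapsTo c T S) (hdS : MapsTo d T S)
    (hdc : d a = c a) (ha : a ∈ T) (hGc : G (c a) < 0)
    (hQd : ∀ y ∈ T, G (d y) < 0 → 0 ≤ Q (d y)) :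
    ∃ K : ℝ≥0, ∀ᶠ y in 𝓝[T] a, -Q (c y) ≤ K * dist (d y) (c y) := by
  have hc' := hc.tendsto_nhdsWithin hcS
  have hd' := hdc ▸ hd.tendsto_nhdsWithin hdS
  obtain ⟨K, t, ht, hK⟩ := hQ (hcS ha)
  refine ⟨K, ?_⟩
  filter_upwards [hc'.eventually_mem ht, hd'.eventually_mem ht,
    ((hG _ (hcS ha)).tendsto.comp hd').eventually_lt_const hGc, eventually_mem_nhdsWithin]
    with y hct hdt hGd hy
  calc -Q (c y) ≤ |Q (d y) - Q (c y)| := by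
        linarith [hQd y hy hGd, le_abs_self (Q (d y) - Q (c y))]
    _ ≤ K * dist (d y) (c y) := Real.dist_eq _ _ ▸ hK.dist_le_mul _ hdt _ hct

end LocallyLipschitzOn

theorem locallyLipschitzOn_sum_mul_mul {E ι : Type*} [PseudoMetricSpace E] [Fintype ι]
    {U : Set E} {A : ι → ι → E → ℝ} (hA : ∀ i j, LocallyLipschitzOn U (A i j)) :
    LocallyLipschitzOn (U ×ˢ univ)
      fun x : E × (ι → ℝ) => ∑ i, ∑ j, A i j x.1 * x.2 i * x.2 j := by
  have hcoord (i : ι) : LocallyLipschitzOn (U ×ˢ univ) fun x : E × (ι → ℝ) => x.2 i :=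
    ((LipschitzWith.eval i).comp LipschitzWith.prod_snd).locallyLipschitz.locallyLipschitzOn
  refine .sum _ fun i _ => .sum _ fun j _ => ?_
  exact (((hA i j).comp_lipschitzWith LipschitzWith.prod_fst fun x hx => hx.1).smul
    (hcoord i)).smul (hcoord j)

theorem continuousOn_sum_mul_mul {E ι : Type*} [TopologicalSpace E] [Fintype ι]
    {U : Set E} {A : ι → ι → E → ℝ} (hA : ∀ i j, ContinuousOn (A i j) U) :
    ContinuousOn (fun x : E × (ι → ℝ) => ∑ i, ∑ j, A i j x.1 * x.2 i * x.2 j)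
      (U ×ˢ univ) := by
  fun_prop (disch := exact fun x hx => hx.1)

theorem dist_update_le {ι : Type*} [Fintype ι] [DecidableEq ι] {β : ι → Type*}
    [∀ i, PseudoMetricSpace (β i)] (x : ∀ i, β i) (i : ι) (a : β i) :
    dist (Function.update x i a) x ≤ dist a (x i) := by
  refine (dist_pi_le_iff dist_nonneg).2 fun j => ?_
  rcases eq_or_ne j i with rfl | hj
  · simp
  · simp [hj]

theorem dist_update_zero_prod_le {ι : Type*} [Fintype ι] [DecidableEq ι] {p v : ι → ℝ}
    {i : ι} (hp : 0 ≤ p i) :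
    dist (Function.update p i 0, Function.update v i 0) (p, v) ≤ p i + |v i| := by
  have hp' := dist_update_le p i 0
  have hv' := dist_update_le v i 0
  rw [Real.dist_eq, zero_sub, abs_neg, abs_of_nonneg hp] at hp'
  rw [Real.dist_eq, zero_sub, abs_neg] at hv'
  rw [Prod.dist_eq, max_le_iff]
  constructor <;> linarith [abs_nonneg (v i)]

theorem integral_eq_sub_of_hasDerivWithinAt_Icc {E : Type*} [NormedAddCommGroup E]
    [NormedSpace ℝ E] [CompleteSpace E] {a b x : ℝ} {f f' : ℝ → E}
    (hf : ∀ y ∈ Icc a b, HasDerivWithinAt f (f' y) (Icc a b) y)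
    (hf' : ContinuousOn f' (Icc a b)) (hx : x ∈ Icc a b) :
    ∫ t in a..x, f' t = f x - f a := by
  have hsub : Icc a x ⊆ Icc a b := Icc_subset_Icc le_rfl hx.2
  refine integral_eq_sub_of_hasDeriv_right_of_le hx.1
    (fun y hy => (hf y (hsub hy)).continuousWithinAt.mono hsub) (fun y hy => ?_)
    ((hf'.mono hsub).intervalIntegrable_of_Icc hx.1)
  exact (hf y (hsub (Ioo_subset_Icc_self hy))).mono_of_mem_nhdsWithin
    (Icc_mem_nhdsGT_of_mem ⟨hy.1.le, hy.2.trans_le hx.2⟩)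

theorem sub_le_integral_max_deriv {a b x : ℝ} {u u' : ℝ → ℝ}
    (hu : ∀ y ∈ Icc a b, HasDerivWithinAt u (u' y) (Icc a b) y)
    (hu'c : ContinuousOn u' (Icc a b)) (hx : x ∈ Icc a b) :
    u x - u a ≤ ∫ t in a..x, max (u' t) 0 := by
  have hsub : Icc a x ⊆ Icc a b := Icc_subset_Icc le_rfl hx.2
  rw [← integral_eq_sub_of_hasDerivWithinAt_Icc hu hu'c hx]
  exact integral_mono_on hx.1 ((hu'c.mono hsub).intervalIntegrable_of_Icc hx.1)
    (((hu'c.sup continuousOn_const).mono hsub).intervalIntegrable_of_Icc hx.1)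
    fun t _ => le_max_left _ _

theorem deriv_le_mul_integral_max_deriv {δ C : ℝ} (hC : 0 ≤ C) {u u' u'' : ℝ → ℝ}
    (hu : ∀ s ∈ Icc 0 δ, HasDerivWithinAt u (u' s) (Icc 0 δ) s)
    (hu' : ∀ s ∈ Icc 0 δ, HasDerivWithinAt u' (u'' s) (Icc 0 δ) s)
    (hu''c : ContinuousOn u'' (Icc 0 δ)) (h0 : u 0 = 0) (h0' : u' 0 = 0)
    (hpos : ∀ s ∈ Icc 0 δ, 0 ≤ u s)
    (hineq : ∀ s ∈ Icc 0 δ, u'' s ≤ C * (u s + |u' s|)) {s : ℝ} (hs : s ∈ Icc 0 δ) :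
    u' s ≤ C * (δ + 2) * ∫ t in 0..s, max (u' t) 0 := by
  have hsub : Icc 0 s ⊆ Icc 0 δ := Icc_subset_Icc le_rfl hs.2
  have hu'c : ContinuousOn u' (Icc 0 δ) := fun s hs => (hu' s hs).continuousWithinAt
  have hu'i : IntervalIntegrable u' MeasureTheory.volume 0 s :=
    (hu'c.mono hsub).intervalIntegrable_of_Icc hs.1
  have hPi : IntervalIntegrable (fun t => max (u' t) 0) MeasureTheory.volume 0 s :=
    ((hu'c.sup continuousOn_const).mono hsub).intervalIntegrable_of_Icc hs.1
  have h2Pi := hPi.const_mul 2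
  set F : ℝ → ℝ := fun x => ∫ t in 0..x, max (u' t) 0
  have hF : 0 ≤ F s := integral_nonneg hs.1 fun _ _ => le_max_right _ _
  have hu_le (t) (ht : t ∈ Icc 0 s) : u t ≤ F s := by
    have := sub_le_integral_max_deriv hu hu'c (hsub ht)
    rw [h0, sub_zero] at this
    exact this.trans <| integral_mono_interval le_rfl ht.1 ht.2
      (.of_forall fun _ => le_max_right _ _) hPi
  calc u' s = ∫ t in 0..s, u'' t := by
        rw [integral_eq_sub_of_hasDerivWithinAt_Icc hu' hu''c hs, h0', sub_zero]
    _ ≤ ∫ t in 0..s, C * (F s + (2 * max (u' t) 0 - u' t)) := by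
        refine integral_mono_on hs.1 ((hu''c.mono hsub).intervalIntegrable_of_Icc hs.1)
          ((intervalIntegrable_const.add (h2Pi.sub hu'i)).const_mul C) fun t ht => ?_
        have habs : |u' t| = 2 * max (u' t) 0 - u' t := by
          rcases le_total (u' t) 0 with h | h
          · rw [abs_of_nonpos h, max_eq_right h]; ring
          · rw [abs_of_nonneg h, max_eq_left h]; ring
        calc u'' t ≤ C * (u t + |u' t|) := hineq t (hsub ht)
          _ ≤ _ := by rw [habs]; gcongr; exact hu_le t ht
    _ = C * (s * F s + (2 * F s - u s)) := by
        rw [integral_const_mul, integral_add intervalIntegrable_const (h2Pi.sub hu'i),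
          integral_const, integral_sub h2Pi hu'i, integral_const_mul,
          integral_eq_sub_of_hasDerivWithinAt_Icc hu hu'c hs, h0]
        simp [F]
    _ ≤ C * (δ + 2) * F s := by
        have := hpos s hs
        have : s * F s ≤ δ * F s := by gcongr; exact hs.2
        nlinarith

theorem eqOn_zero_integral_of_le_mul_integral {a b K : ℝ} (hab : a ≤ b) {P : ℝ → ℝ}
    (hP : ContinuousOn P (Icc a b)) (hP0 : ∀ s ∈ Icc a b, 0 ≤ P s)
    (hle : ∀ s ∈ Icc a b, P s ≤ K * ∫ t in a..s, P t) :
    EqOn (fun s => ∫ t in a..s, P t) 0 (Icc a b) := by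
  set P' : ℝ → ℝ := IccExtend hab ((Icc a b).domRestrict P)
  have hP' : Continuous P' := continuous_IccExtend_iff.2 hP.domRestrict
  have hP'P : EqOn P' P (Icc a b) := fun s hs => IccExtend_of_mem hab _ hs
  have hint (s) (hs : s ∈ Icc a b) : ∫ t in a..s, P' t = ∫ t in a..s, P t :=
    integral_congr <| hP'P.mono <| uIcc_of_le hs.1 ▸ Icc_subset_Icc le_rfl hs.2
  have hF := fun s => (hP'.integral_hasStrictDerivAt a s).hasDerivAt
  intro s hs
  show ∫ t in a..s, P t = 0
  rw [← hint s hs]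
  refine eq_zero_of_abs_deriv_le_mul_abs_self_of_eq_zero_right (K := K)
    (fun s _ => (hF s).continuousAt.continuousWithinAt) (fun s _ => (hF s).hasDerivWithinAt)
    integral_same (fun x hx => ?_) s hs
  have hx' := Ico_subset_Icc_self hx
  rw [hint x hx', hP'P hx', Real.norm_of_nonneg (hP0 x hx'),
    Real.norm_of_nonneg (integral_nonneg hx'.1 fun t ht => hP0 t ⟨ht.1, ht.2.trans hx'.2⟩)]
  exact hle x hx'

theorem eqOn_zero_of_nonneg_of_secondDeriv_le {δ C : ℝ} (hδ : 0 ≤ δ) (hC : 0 ≤ C)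
    {u u' u'' : ℝ → ℝ}
    (hu : ∀ s ∈ Icc 0 δ, HasDerivWithinAt u (u' s) (Icc 0 δ) s)
    (hu' : ∀ s ∈ Icc 0 δ, HasDerivWithinAt u' (u'' s) (Icc 0 δ) s)
    (hu''c : ContinuousOn u'' (Icc 0 δ)) (h0 : u 0 = 0) (h0' : u' 0 = 0)
    (hpos : ∀ s ∈ Icc 0 δ, 0 ≤ u s)
    (hineq : ∀ s ∈ Icc 0 δ, u'' s ≤ C * (u s + |u' s|)) :
    EqOn u 0 (Icc 0 δ) := by
  have hu'c : ContinuousOn u' (Icc 0 δ) := fun s hs => (hu' s hs).continuousWithinAt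
  have hF := eqOn_zero_integral_of_le_mul_integral hδ (hu'c.sup continuousOn_const)
    (fun _ _ => le_max_right _ _) fun s hs => max_le
      (deriv_le_mul_integral_max_deriv hC hu hu' hu''c h0 h0' hpos hineq hs)
      (mul_nonneg (by positivity) (integral_nonneg hs.1 fun _ _ => le_max_right _ _))
  intro s hs
  have := sub_le_integral_max_deriv hu hu'c hs
  rw [h0, sub_zero] at this
  exact le_antisymm (this.trans_eq (hF hs)) (hpos s hs)

/-- **Lemma 3.2 for time-infinitesimal convexity** (coordinate form): with
locally Lipschitz symmetric Christoffel symbols `Γ` and a continuous symmetric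
metric field `g` on `U`, if the infinitesimal-convexity condition
`∑ Γ^m_{ij}(p) v^i v^j ≥ 0` holds at points of the hypersurface `{x^m = 0}` for
all timelike tangent vectors `v` (i.e. `v^m = 0` and `g_p(v,v) < 0`), then a
geodesic starting on the hypersurface with timelike initial velocity tangent to
it and remaining on the side `{x^m ≥ 0}` stays in `{x^m = 0}` on some smaller
interval `[0, b']`. -/
theorem stmt_13 (m : ℕ) (hm : 0 < m) (U : Set (Fin m → ℝ))
    (Γ : Fin m → Fin m → Fin m → (Fin m → ℝ) → ℝ)
    (hΓlip : ∀ l i j, LocallyLipschitzOn U (Γ l i j))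
    (g : (Fin m → ℝ) → Fin m → Fin m → ℝ)
    (hgcont : ∀ i j, ContinuousOn (fun p => g p i j) U)
    (hconv : ∀ p ∈ U, p ⟨m - 1, by omega⟩ = 0 →
      ∀ v : Fin m → ℝ, v ⟨m - 1, by omega⟩ = 0 →
        (∑ i, ∑ j, g p i j * v i * v j) < 0 →
        0 ≤ ∑ i, ∑ j, Γ ⟨m - 1, by omega⟩ i j p * v i * v j)
    (b : ℝ) (hb : 0 < b) (γ γ' γ'' : ℝ → Fin m → ℝ)
    (hγU : ∀ s ∈ Icc (0 : ℝ) b, γ s ∈ U)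
    (hγ' : ∀ s ∈ Icc (0 : ℝ) b, HasDerivWithinAt γ (γ' s) (Icc (0 : ℝ) b) s)
    (hγ'' : ∀ s ∈ Icc (0 : ℝ) b, HasDerivWithinAt γ' (γ'' s) (Icc (0 : ℝ) b) s)
    (hγ''cont : ContinuousOn γ'' (Icc (0 : ℝ) b))
    (hgeo : ∀ s ∈ Icc (0 : ℝ) b, ∀ l,
      γ'' s l = -∑ i, ∑ j, Γ l i j (γ s) * γ' s i * γ' s j)
    (hinit : γ 0 ⟨m - 1, by omega⟩ = 0)
    (hinit' : γ' 0 ⟨m - 1, by omega⟩ = 0)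
    (hTL : (∑ i, ∑ j, g (γ 0) i j * γ' 0 i * γ' 0 j) < 0)
    (hside : ∀ s ∈ Icc (0 : ℝ) b, 0 ≤ γ s ⟨m - 1, by omega⟩)
    (hproj : ∀ s ∈ Icc (0 : ℝ) b,
      Function.update (γ s) ⟨m - 1, by omega⟩ 0 ∈ U) :
    ∃ b' : ℝ, 0 < b' ∧ b' ≤ b ∧
      ∀ s ∈ Icc (0 : ℝ) b', γ s ⟨m - 1, by omega⟩ = 0 := by
  set e : Fin m := ⟨m - 1, by omega⟩
  have h0 : (0 : ℝ) ∈ Icc 0 b := ⟨le_rfl, hb.le⟩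
  have hγc := (hγ' 0 h0).continuousWithinAt
  have hγ'c := (hγ'' 0 h0).continuousWithinAt
  obtain ⟨K, hK⟩ := (locallyLipschitzOn_sum_mul_mul fun i j => hΓlip e i j)
    |>.exists_eventually_neg_le_mul_dist (continuousOn_sum_mul_mul hgcont) (hγc.prodMk hγ'c)
      ((hγc.tendsto.update e tendsto_const_nhds).prodMk_nhds
        (hγ'c.tendsto.update e tendsto_const_nhds))
      (fun s hs => ⟨hγU s hs, ⟨⟩⟩) (fun s hs => ⟨hproj s hs, ⟨⟩⟩)
      (Prod.ext (Function.update_eq_self_iff.2 hinit.symm)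
        (Function.update_eq_self_iff.2 hinit'.symm)) h0 hTL
      fun s hs => hconv _ (hproj s hs) (Function.update_self ..) _ (Function.update_self ..)
  obtain ⟨δ, hδ, hδsub⟩ := mem_nhdsGE_iff_exists_Icc_subset.1 <|
    nhdsWithin_Icc_eq_nhdsGE hb ▸ (eventually_mem_nhdsWithin.and hK)
  have hδb : Icc 0 δ ⊆ Icc 0 b := fun s hs => (hδsub hs).1
  refine ⟨δ, hδ, (hδb ⟨hδ.le, le_rfl⟩).2, eqOn_zero_of_nonneg_of_secondDeriv_le hδ.le K.2
    (fun s hs => (hasDerivWithinAt_pi.1 (hγ' s (hδb hs)) e).mono hδb)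
    (fun s hs => (hasDerivWithinAt_pi.1 (hγ'' s (hδb hs)) e).mono hδb)
    (((continuous_apply e).comp_continuousOn hγ''cont).mono hδb) hinit hinit'
    (fun s hs => hside s (hδb hs)) fun s hs => ?_⟩
  obtain ⟨hsb, hs⟩ := hδsub hs
  rw [hgeo s hsb e]
  exact hs.trans (mul_le_mul_of_nonneg_left (dist_update_zero_prod_le (hside s hsb)) K.2)
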